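/- arXiv:2305.01377 — 4 statements merged into one kernel-verified Lean document; each statement's English description precedes it below -/
import Mathlib

section
/- Let C: ℝ≥0 → ℝ be given by C(x) = σ²·exp(−x/(2s²)) with σ, s > 0, and fix ξ ≤ 0. Then the function η ↦ (C(η²)/C(0))·ξ − η·(C'(η²)/C'(0)) = exp(−η²/(2s²))·(ξ − η) attains its global minimum over η ∈ ℝ at η̂ = ξ/2 + √((ξ/2)² + s²). -/
/-! The objective `exp(−η²/(2s²))·(ξ − η)` at a root `a ≥ ξ` of `a² − aξ − s² = 0` is compared
with its value at any `η` by writing `exp(−a²/(2s²)) = exp(−η²/(2s²))·exp t` and bounding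
`exp t ≥ 1 + t` (the factor `ξ − a` is nonpositive); what remains is the polynomial inequality
`(2s² + η² − a²)(ξ − a) ≤ 2s²(ξ − η)`, whose difference is `−(a − ξ)(η − a)²`. -/

open Real

theorem deriv_const_mul_exp_neg_div (c k x : ℝ) :
    deriv (fun x => c * exp (-x / k)) x = -(c * exp (-x / k)) / k := by
  have h : HasDerivAt (fun x => -x / k) (-1 / k) x := (hasDerivAt_neg x).div_const k
  rw [(h.exp.const_mul c).deriv]
  ring

theorem sq_sub_mul_half_add_sqrt {ξ c : ℝ} (hc : 0 ≤ c) :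
    (ξ / 2 + √((ξ / 2) ^ 2 + c)) ^ 2 - (ξ / 2 + √((ξ / 2) ^ 2 + c)) * ξ = c := by
  have h : √((ξ / 2) ^ 2 + c) ^ 2 = (ξ / 2) ^ 2 + c := sq_sqrt (by positivity)
  linear_combination h

theorem le_half_add_sqrt (ξ : ℝ) {c : ℝ} (hc : 0 ≤ c) : ξ ≤ ξ / 2 + √((ξ / 2) ^ 2 + c) := by
  have : ξ / 2 ≤ √((ξ / 2) ^ 2 + c) :=
    (le_abs_self _).trans (abs_le_sqrt (le_add_of_nonneg_right hc))
  linarith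

theorem exp_neg_sq_div_mul_sub_le {s ξ a : ℝ} (hs : s ≠ 0) (ha : a ^ 2 - a * ξ = s ^ 2)
    (hξa : ξ ≤ a) (η : ℝ) :
    exp (-a ^ 2 / (2 * s ^ 2)) * (ξ - a) ≤ exp (-η ^ 2 / (2 * s ^ 2)) * (ξ - η) := by
  have hk : 0 < 2 * s ^ 2 := by positivity
  set t := (η ^ 2 - a ^ 2) / (2 * s ^ 2)
  have hsplit : exp (-a ^ 2 / (2 * s ^ 2)) = exp (-η ^ 2 / (2 * s ^ 2)) * exp t := by
    rw [← exp_add]; congr 1; ring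
  have htangent : exp t * (ξ - a) ≤ (t + 1) * (ξ - a) :=
    mul_le_mul_of_nonpos_right (add_one_le_exp t) (by linarith)
  have hpoly : (t + 1) * (ξ - a) ≤ ξ - η := by
    have hdiff : (t + 1) * (ξ - a) * (2 * s ^ 2) = (ξ - η) * (2 * s ^ 2) - (a - ξ) * (η - a) ^ 2 := by
      simp only [t]; field_simp; linear_combination (2 * a - 2 * η) * ha
    nlinarith [mul_nonneg (sub_nonneg.2 hξa) (sq_nonneg (η - a))]
  calc exp (-a ^ 2 / (2 * s ^ 2)) * (ξ - a)
      = exp (-η ^ 2 / (2 * s ^ 2)) * (exp t * (ξ - a)) := by rw [hsplit]; ring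
    _ ≤ exp (-η ^ 2 / (2 * s ^ 2)) * (ξ - η) := by gcongr; linarith

theorem sqExp_optimal_step_size_general (σ s ξ : ℝ) (hσ : 0 < σ) (hs : 0 < s) :
    (∀ η : ℝ,
      ((fun x => σ ^ 2 * Real.exp (-x / (2 * s ^ 2))) (η ^ 2)
            / (fun x => σ ^ 2 * Real.exp (-x / (2 * s ^ 2))) 0) * ξ
          - η * (deriv (fun x => σ ^ 2 * Real.exp (-x / (2 * s ^ 2))) (η ^ 2)
            / deriv (fun x => σ ^ 2 * Real.exp (-x / (2 * s ^ 2))) 0)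
        = Real.exp (-η ^ 2 / (2 * s ^ 2)) * (ξ - η)) ∧
    (∀ η : ℝ,
      Real.exp (-(ξ / 2 + Real.sqrt ((ξ / 2) ^ 2 + s ^ 2)) ^ 2 / (2 * s ^ 2))
          * (ξ - (ξ / 2 + Real.sqrt ((ξ / 2) ^ 2 + s ^ 2)))
        ≤ Real.exp (-η ^ 2 / (2 * s ^ 2)) * (ξ - η)) := by
  refine ⟨fun η => ?_, exp_neg_sq_div_mul_sub_le hs.ne'
    (sq_sub_mul_half_add_sqrt (sq_nonneg s)) (le_half_add_sqrt ξ (sq_nonneg s))⟩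
  simp only [deriv_const_mul_exp_neg_div, neg_zero, zero_div, exp_zero, mul_one]
  field_simp

/-- For the squared exponential covariance `C(x) = σ²·exp(−x/(2s²))` and
`ξ ≤ 0`, the RFD objective `η ↦ C(η²)/C(0)·ξ − η·C'(η²)/C'(0)` equals
`exp(−η²/(2s²))·(ξ − η)` and attains its global minimum at
`η̂ = ξ/2 + √((ξ/2)² + s²)`. -/
theorem sqExp_optimal_step_size (σ s ξ : ℝ) (hσ : 0 < σ) (hs : 0 < s)
    (hξ : ξ ≤ 0) :
    (∀ η : ℝ,
      ((fun x => σ ^ 2 * Real.exp (-x / (2 * s ^ 2))) (η ^ 2)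
            / (fun x => σ ^ 2 * Real.exp (-x / (2 * s ^ 2))) 0) * ξ
          - η * (deriv (fun x => σ ^ 2 * Real.exp (-x / (2 * s ^ 2))) (η ^ 2)
            / deriv (fun x => σ ^ 2 * Real.exp (-x / (2 * s ^ 2))) 0)
        = Real.exp (-η ^ 2 / (2 * s ^ 2)) * (ξ - η)) ∧
    (∀ η : ℝ,
      Real.exp (-(ξ / 2 + Real.sqrt ((ξ / 2) ^ 2 + s ^ 2)) ^ 2 / (2 * s ^ 2))
          * (ξ - (ξ / 2 + Real.sqrt ((ξ / 2) ^ 2 + s ^ 2)))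
        ≤ Real.exp (-η ^ 2 / (2 * s ^ 2)) * (ξ - η)) :=
  sqExp_optimal_step_size_general σ s ξ hσ hs
end

section
/- Fix s > 0, ξ ≤ 0 and set a := 1 − (√3/s)·ξ ≥ 1. The function G(η) := exp(−√3 η/s)·[(1 + √3 η/s)·ξ − η] over η ≥ 0 attains its minimum at η̂ = (s/√3)·(1/a) = (s/√3)/(1 − (√3/s)ξ). -/
/-!
With `u = √3/s`, `t = u η` and `a = 1 - u ξ > 0`, the objective factors as
`G(η) = -(a/u) · exp(-t) · (t - 1/a + 1)`. Since `1 + x ≤ exp x`, the second factor is at most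
`exp(-1/a)`, with equality at `t = 1/a`; as `a/u > 0`, `G` is minimal at `η̂ = 1/(u a)`.
-/

open Real

theorem Real.exp_neg_mul_sub_add_one_le (t c : ℝ) : exp (-t) * (t - c + 1) ≤ exp (-c) := by
  calc exp (-t) * (t - c + 1) ≤ exp (-t) * exp (t - c) :=
        mul_le_mul_of_nonneg_left (add_one_le_exp _) (exp_pos _).le
    _ = exp (-c) := by rw [← exp_add]; ring_nf

noncomputable def maternThreeHalvesObjective (u ξ η : ℝ) : ℝ :=
  exp (-(u * η)) * ((1 + u * η) * ξ - η)

namespace maternThreeHalvesObjective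

variable {u ξ : ℝ}

theorem eq_neg_mul (hu : u ≠ 0) (ha : 1 - u * ξ ≠ 0) (η : ℝ) :
    maternThreeHalvesObjective u ξ η =
      -((1 - u * ξ) / u) * (exp (-(u * η)) * (u * η - (1 - u * ξ)⁻¹ + 1)) := by
  unfold maternThreeHalvesObjective
  field_simp
  ring

theorem isMinOn (hu : 0 < u) (ha : u * ξ < 1) :
    IsMinOn (maternThreeHalvesObjective u ξ) Set.univ (u⁻¹ / (1 - u * ξ)) := by
  intro η _
  have ha' : 0 < 1 - u * ξ := by linarith
  have ht_min : u * (u⁻¹ / (1 - u * ξ)) = (1 - u * ξ)⁻¹ := by field_simp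
  rw [Set.mem_ofPred_eq, eq_neg_mul hu.ne' ha'.ne', eq_neg_mul hu.ne' ha'.ne', ht_min, sub_self,
    zero_add, mul_one]
  have hscale : 0 ≤ (1 - u * ξ) / u := by positivity
  exact mul_le_mul_of_nonpos_left (exp_neg_mul_sub_add_one_le _ _) (neg_nonpos.mpr hscale)

end maternThreeHalvesObjective

/-- For the Matérn covariance with ν = 3/2 and normalized centered loss
`ξ ≤ 0`, the RFD step-size objective
`G(η) = exp(−√3·η/s)·((1 + √3·η/s)·ξ − η)` attains its minimum over `η ≥ 0`
at `η̂ = (s/√3)/(1 − (√3/s)·ξ)`. -/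
theorem matern_three_halves_rfd_step (s ξ : ℝ) (hs : 0 < s) (hξ : ξ ≤ 0) :
    ∀ η : ℝ, 0 ≤ η →
      Real.exp (-(Real.sqrt 3) * ((s / Real.sqrt 3) / (1 - Real.sqrt 3 / s * ξ)) / s)
          * ((1 + Real.sqrt 3 * ((s / Real.sqrt 3) / (1 - Real.sqrt 3 / s * ξ)) / s) * ξ
            - (s / Real.sqrt 3) / (1 - Real.sqrt 3 / s * ξ))
        ≤ Real.exp (-(Real.sqrt 3) * η / s)
            * ((1 + Real.sqrt 3 * η / s) * ξ - η) := by
  intro η _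
  have hu : 0 < √3 / s := by positivity
  have ha : √3 / s * ξ < 1 := by linarith [mul_nonpos_of_nonneg_of_nonpos hu.le hξ]
  have hmin : maternThreeHalvesObjective (√3 / s) ξ ((√3 / s)⁻¹ / (1 - √3 / s * ξ)) ≤
      maternThreeHalvesObjective (√3 / s) ξ η :=
    maternThreeHalvesObjective.isMinOn hu ha (Set.mem_univ η)
  rw [inv_div] at hmin
  unfold maternThreeHalvesObjective at hmin
  convert hmin using 3 <;> ring
end

section
/- Fix β > 0, s > 0, ξ ≤ 0. The polynomial p(η̃) := 1 + (√β ξ/s)·η̃ − (1+β)·η̃² + (√β ξ/s)·η̃³ has a unique positive root η̃*, which lies in the interval [0, 1/√(1+β)], and p is strictly decreasing on [0, ∞). -/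
/-!
With `c := √β ξ / s ≤ 0` and `a := 1 + β > 0`, the polynomial is `1 + c t - a t² + c t³`:
on `[0, ∞)` the two `c`-terms are antitone and `-a t²` is strictly antitone, so the
polynomial is strictly decreasing there and has at most one nonnegative root. It equals `1`
at `0` and is `≤ 0` at `1/√a` (where `a t² = 1`), so the intermediate value theorem gives
a root in `[0, 1/√a]`, and strict monotonicity puts every nonnegative root below `1/√a`.
-/

open Set

section FocPoly

def focPoly (a c t : ℝ) : ℝ := 1 + c * t - a * t ^ 2 + c * t ^ 3

variable {a c : ℝ}

theorem strictAntiOn_focPoly (ha : 0 < a) (hc : c ≤ 0) : StrictAntiOn (focPoly a c) (Ici 0) := by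
  intro x (hx : 0 ≤ x) y _ hxy
  have hsq : x ^ 2 < y ^ 2 := by gcongr
  have hcube : x ^ 3 ≤ y ^ 3 := by gcongr
  have hlin : c * y ≤ c * x := mul_le_mul_of_nonpos_left hxy.le hc
  have hcub : c * y ^ 3 ≤ c * x ^ 3 := mul_le_mul_of_nonpos_left hcube hc
  have hquad : a * x ^ 2 < a * y ^ 2 := mul_lt_mul_of_pos_left hsq ha
  unfold focPoly
  linarith

theorem focPoly_zero : focPoly a c 0 = 1 := by simp [focPoly]

theorem focPoly_inv_sqrt_nonpos (ha : 0 < a) (hc : c ≤ 0) : focPoly a c (1 / √a) ≤ 0 := by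
  have hpos : 0 < 1 / √a := by positivity
  have hsq : a * (1 / √a) ^ 2 = 1 := by
    rw [div_pow, one_pow, Real.sq_sqrt ha.le]
    field_simp
  have hlin : c * (1 / √a) ≤ 0 := mul_nonpos_of_nonpos_of_nonneg hc hpos.le
  have hcub : c * (1 / √a) ^ 3 ≤ 0 := mul_nonpos_of_nonpos_of_nonneg hc (by positivity)
  unfold focPoly
  linarith

theorem exists_focPoly_eq_zero_mem_Icc (ha : 0 < a) (hc : c ≤ 0) :
    ∃ t ∈ Icc 0 (1 / √a), focPoly a c t = 0 := by
  have hcont : ContinuousOn (focPoly a c) (Icc 0 (1 / √a)) := by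
    unfold focPoly
    fun_prop
  refine intermediate_value_Icc' (by positivity) hcont ⟨focPoly_inv_sqrt_nonpos ha hc, ?_⟩
  rw [focPoly_zero]
  exact zero_le_one

theorem le_inv_sqrt_of_focPoly_eq_zero (ha : 0 < a) (hc : c ≤ 0) {t : ℝ} (ht : 0 ≤ t)
    (hroot : focPoly a c t = 0) : t ≤ 1 / √a := by
  refine ((strictAntiOn_focPoly ha hc).le_iff_ge (by positivity : (0 : ℝ) ≤ 1 / √a) ht).mp ?_
  rw [hroot]
  exact focPoly_inv_sqrt_nonpos ha hc

theorem existsUnique_nonneg_focPoly_eq_zero (ha : 0 < a) (hc : c ≤ 0) :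
    ∃! t, 0 ≤ t ∧ focPoly a c t = 0 := by
  obtain ⟨t, ⟨ht, -⟩, hroot⟩ := exists_focPoly_eq_zero_mem_Icc ha hc
  refine ⟨t, ⟨ht, hroot⟩, fun u ⟨hu, hu_root⟩ => ?_⟩
  exact (strictAntiOn_focPoly ha hc).injOn hu ht (hu_root.trans hroot.symm)

end FocPoly

/-- For the rational quadratic covariance model with `β > 0`, `s > 0` and
`ξ ≤ 0`, the first-order-condition polynomial
`p(t) = 1 + (√β·ξ/s)·t − (1+β)·t² + (√β·ξ/s)·t³` is strictly decreasing on
`[0, ∞)`, has a unique nonnegative root, and this root lies in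
`[0, 1/√(1+β)]`. -/
theorem rational_quadratic_unique_root (β s ξ : ℝ) (hβ : 0 < β) (hs : 0 < s)
    (hξ : ξ ≤ 0) :
    StrictAntiOn
        (fun t : ℝ => 1 + Real.sqrt β * ξ / s * t - (1 + β) * t ^ 2
          + Real.sqrt β * ξ / s * t ^ 3) (Set.Ici 0) ∧
    (∃! t : ℝ, 0 ≤ t ∧
      1 + Real.sqrt β * ξ / s * t - (1 + β) * t ^ 2
        + Real.sqrt β * ξ / s * t ^ 3 = 0) ∧
    (∀ t : ℝ, 0 ≤ t →
      1 + Real.sqrt β * ξ / s * t - (1 + β) * t ^ 2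
          + Real.sqrt β * ξ / s * t ^ 3 = 0 →
      t ≤ 1 / Real.sqrt (1 + β)) := by
  have ha : (0 : ℝ) < 1 + β := by linarith
  have hc : Real.sqrt β * ξ / s ≤ 0 :=
    div_nonpos_of_nonpos_of_nonneg (mul_nonpos_of_nonneg_of_nonpos (Real.sqrt_nonneg β) hξ) hs.le
  exact ⟨strictAntiOn_focPoly ha hc, existsUnique_nonneg_focPoly_eq_zero ha hc,
    fun t ht hroot => le_inv_sqrt_of_focPoly_eq_zero ha hc ht hroot⟩
end

section
/- For p ≥ 1 and 0 ≤ k ≤ p−1, define a_p(k) := (p!/(2p)!)·((2p−k)!/((p−k)!·k!))·2^k and d_p(k) := a_p(k+1) − (k+2)·a_p(k+2) for k ≤ p−2, d_p(p−1) := a_p(p). Then d_p(k) = a_{p−1}(k)/(2p−1) for 0 ≤ k ≤ p−2; moreover a_p(0) = 1, a_p(1) = 1 (for p ≥ 1), and a_p(p) = 1/(2p−1)!! where (2p−1)!! = (2p)!/(2^p·p!). -/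
open Nat

/-- Matérn polynomial coefficients `a_p(k)`. -/
noncomputable def maternCoeff (p k : ℕ) : ℚ :=
  ((p ! : ℚ) / ((2 * p)! : ℚ)) * (((2 * p - k)! : ℚ) / (((p - k)! : ℚ) * (k ! : ℚ)))
    * 2 ^ k

/-- The derived coefficients `d_p(k)`. -/
noncomputable def maternDCoeff (p k : ℕ) : ℚ :=
  if k = p - 1 then maternCoeff p p
  else maternCoeff p (k + 1) - (k + 2) * maternCoeff p (k + 2)

/-!
Everything follows from two ratios of neighbouring coefficients,
`a_p(k+1) / a_p(k) = 2(p-k) / ((k+1)(2p-k))` and `a_{p+1}(k+1) / a_p(k) = (2p+1-k) / ((2p+1)(k+1))`.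
The first collapses `a_p(k+1) - (k+2) a_p(k+2)` to `(k+1) a_p(k+1) / (2p-k-1)`, and the second
turns this into `a_{p-1}(k) / (2p-1)`. Writing `p = m + k` avoids truncated subtraction throughout.
-/

theorem maternCoeff_add (m k : ℕ) :
    maternCoeff (m + k) k =
      (m + k)! * (2 * m + k)! * 2 ^ k / ((2 * (m + k))! * m ! * k !) := by
  rw [maternCoeff, show 2 * (m + k) - k = 2 * m + k by omega, Nat.add_sub_cancel]
  ring

theorem maternCoeff_zero_right (p : ℕ) : maternCoeff p 0 = 1 := by
  rw [maternCoeff, Nat.sub_zero, Nat.sub_zero, Nat.factorial_zero, Nat.cast_one]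
  field_simp

theorem maternCoeff_self (p : ℕ) : maternCoeff p p = 2 ^ p * p ! / (2 * p)! := by
  rw [maternCoeff, Nat.sub_self, show 2 * p - p = p by omega, Nat.factorial_zero, Nat.cast_one]
  field_simp

theorem maternCoeff_succ_one (q : ℕ) : maternCoeff (q + 1) 1 = 1 := by
  rw [maternCoeff_add, show 2 * (q + 1) = 2 * q + 1 + 1 by ring]
  push_cast [Nat.factorial_succ]
  field_simp
  ring

theorem maternCoeff_succ_right (m k : ℕ) :
    ((k + 1) * (2 * m + k + 2) : ℚ) * maternCoeff (m + k + 1) (k + 1) =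
      2 * (m + 1) * maternCoeff (m + k + 1) k := by
  rw [show m + k + 1 = m + (k + 1) by ring, maternCoeff_add,
    show m + (k + 1) = (m + 1) + k by ring, maternCoeff_add,
    show 2 * (m + 1) + k = 2 * m + (k + 1) + 1 by ring]
  push_cast [Nat.factorial_succ]
  field_simp
  ring

theorem maternCoeff_succ_succ (m k : ℕ) :
    ((2 * m + 2 * k + 1) * (k + 1) : ℚ) * maternCoeff (m + k + 1) (k + 1) =
      (2 * m + k + 1) * maternCoeff (m + k) k := by
  rw [show m + k + 1 = m + (k + 1) by ring, maternCoeff_add, maternCoeff_add,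
    show 2 * (m + (k + 1)) = 2 * (m + k) + 1 + 1 by ring,
    show 2 * m + (k + 1) = 2 * m + k + 1 by ring, show m + (k + 1) = m + k + 1 by ring]
  push_cast [Nat.factorial_succ]
  field_simp
  ring

theorem maternDCoeff_add_two (m k : ℕ) :
    maternDCoeff (m + k + 2) k = maternCoeff (m + k + 1) k / (2 * ((m + k + 2 : ℕ) : ℚ) - 1) := by
  have hstep := maternCoeff_succ_right m (k + 1)
  have hshift := maternCoeff_succ_succ (m + 1) k
  simp only [show m + (k + 1) + 1 = m + k + 2 by ring, show m + 1 + k = m + k + 1 by ring,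
    show k + 1 + 1 = k + 2 by ring] at hstep hshift
  rw [maternDCoeff, if_neg (by omega),
    show (2 * ((m + k + 2 : ℕ) : ℚ) - 1) = 2 * m + 2 * k + 3 by push_cast; ring,
    eq_div_iff (by positivity)]
  refine mul_left_cancel₀ (show (2 * m + k + 3 : ℚ) ≠ 0 by positivity) ?_
  push_cast at hstep hshift ⊢
  linear_combination (-(2 * m + 2 * k + 3 : ℚ)) * hstep + hshift

/-- Identities for the Matérn coefficients: `d_p(k) = a_{p−1}(k)/(2p−1)` for
`0 ≤ k ≤ p−2`, and `a_p(0) = 1`, `a_p(1) = 1`, `a_p(p) = 1/(2p−1)!!` where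
`(2p−1)!! = (2p)!/(2^p·p!)`. -/
theorem matern_coefficient_identities (p : ℕ) (hp : 1 ≤ p) :
    (∀ k : ℕ, k + 2 ≤ p →
      maternDCoeff p k = maternCoeff (p - 1) k / (2 * (p : ℚ) - 1)) ∧
    maternCoeff p 0 = 1 ∧
    maternCoeff p 1 = 1 ∧
    maternCoeff p p = (2 ^ p * (p ! : ℚ)) / ((2 * p)! : ℚ) := by
  refine ⟨fun k hk => ?_, maternCoeff_zero_right p, ?_, maternCoeff_self p⟩
  · obtain ⟨m, rfl⟩ : ∃ m, p = m + k + 2 := ⟨p - k - 2, by omega⟩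
    rw [maternDCoeff_add_two, show m + k + 2 - 1 = m + k + 1 by omega]
  · obtain ⟨q, rfl⟩ : ∃ q, p = q + 1 := ⟨p - 1, by omega⟩
    exact maternCoeff_succ_one q
end
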